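/- arXiv:1605.09744 — 3 statements merged into one kernel-verified Lean document; each statement's English description precedes it below -/
import Mathlib

section
/- Let ψ₁ : ℝ² → ℝ be a Schwartz function and for T > 0 set ψ_T(x₁,x₂) = T^{-3/4} ψ₁(x₁/T^{1/4}, x₂/T^{1/2}). Then for every integer k ≥ 0 and every real α ≥ 0 there is a constant C (depending on ψ₁, k, α) such that ∫_{ℝ²} |∂₁^k ψ_T(x−y)| d(x,y)^α dy ≤ C (T^{1/4})^{−k+α} and ∫_{ℝ²} |∂₂^k ψ_T(x−y)| d(x,y)^α dy ≤ C (T^{1/4})^{−2k+α}, where d(x,y) = |x₁−y₁| + √|x₂−y₂|. -/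
/-! Both integrals are translation invariant, so they are moments of `∂ᵢ^k ψ_T` against the
parabolic norm `|u₁| + √|u₂|`. The substitution `u = (T^{1/4} v₁, T^{1/2} v₂)` has Jacobian
`T^{3/4}`, which cancels the prefactor of `ψ_T`; it multiplies the parabolic norm by `T^{1/4}`,
and each `∂₁` (resp. `∂₂`) contributes a factor `T^{-1/4}` (resp. `T^{-1/2}`). Hence both
integrals equal a power of `T^{1/4}` times the corresponding moment of `ψ₁`, and `C` is read off
from those two moments. -/

open MeasureTheory

/-- The parabolic distance `d(x,y) = |x₁−y₁| + √|x₂−y₂|` on `ℝ²`. -/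
noncomputable def pd (x y : ℝ × ℝ) : ℝ := |x.1 - y.1| + Real.sqrt |x.2 - y.2|

/-- Parabolic rescaling of a kernel: `ψ_T(x₁,x₂) = T^{-3/4} ψ(x₁/T^{1/4}, x₂/T^{1/2})`. -/
noncomputable def pker (ψ : ℝ × ℝ → ℝ) (T : ℝ) (x : ℝ × ℝ) : ℝ :=
  T ^ (-(3 / 4 : ℝ)) * ψ (x.1 / T ^ ((1 : ℝ) / 4), x.2 / T ^ ((1 : ℝ) / 2))

/-- `k`-th partial derivative in the first coordinate. -/
noncomputable def partial1 (k : ℕ) (f : ℝ × ℝ → ℝ) (z : ℝ × ℝ) : ℝ :=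
  iteratedDeriv k (fun s => f (s, z.2)) z.1

/-- `k`-th partial derivative in the second coordinate. -/
noncomputable def partial2 (k : ℕ) (f : ℝ × ℝ → ℝ) (z : ℝ × ℝ) : ℝ :=
  iteratedDeriv k (fun s => f (z.1, s)) z.2

lemma integral_comp_mul_prod {E : Type*} [NormedAddCommGroup E] [NormedSpace ℝ E]
    (G : ℝ × ℝ → E) {a b : ℝ} (ha : a ≠ 0) (hb : b ≠ 0) :
    ∫ z : ℝ × ℝ, G (a * z.1, b * z.2) = |(a * b)⁻¹| • ∫ z, G z := by
  have hemb : MeasurableEmbedding (Prod.map (a * ·) (b * ·) : ℝ × ℝ → ℝ × ℝ) :=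
    (measurableEmbedding_mulLeft₀ ha).prodMap (measurableEmbedding_mulLeft₀ hb)
  have hmap : Measure.map (Prod.map (a * ·) (b * ·)) (volume : Measure (ℝ × ℝ)) =
      (ENNReal.ofReal |a⁻¹| * ENNReal.ofReal |b⁻¹|) • volume := by
    rw [Measure.volume_eq_prod, ← Measure.map_prod_map _ _ (measurable_const_mul a)
      (measurable_const_mul b), Real.map_volume_mul_left ha, Real.map_volume_mul_left hb,
      Measure.prod_smul_left, Measure.prod_smul_right, smul_smul]
  calc ∫ z : ℝ × ℝ, G (a * z.1, b * z.2)
      = ∫ z, G z ∂Measure.map (Prod.map (a * ·) (b * ·)) volume := (hemb.integral_map G).symm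
    _ = |(a * b)⁻¹| • ∫ z, G z := by
      rw [hmap, integral_smul_measure, ENNReal.toReal_mul, ENNReal.toReal_ofReal (abs_nonneg _),
        ENNReal.toReal_ofReal (abs_nonneg _), mul_inv, abs_mul]

lemma partial1_const_mul_comp_mul {g : ℝ × ℝ → ℝ} {k : ℕ} (hg : ContDiff ℝ k g) (c a b : ℝ)
    (z : ℝ × ℝ) :
    partial1 k (fun x => c * g (a * x.1, b * x.2)) z =
      c * a ^ k * partial1 k g (a * z.1, b * z.2) := by
  have hslice : ContDiff ℝ k fun s => g (s, b * z.2) := hg.comp (contDiff_id.prodMk contDiff_const)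
  rw [partial1, iteratedDeriv_const_mul_field, congrFun (iteratedDeriv_comp_const_mul hslice a),
    partial1, mul_assoc]

lemma partial2_const_mul_comp_mul {g : ℝ × ℝ → ℝ} {k : ℕ} (hg : ContDiff ℝ k g) (c a b : ℝ)
    (z : ℝ × ℝ) :
    partial2 k (fun x => c * g (a * x.1, b * x.2)) z =
      c * b ^ k * partial2 k g (a * z.1, b * z.2) := by
  have hslice : ContDiff ℝ k fun s => g (a * z.1, s) := hg.comp (contDiff_const.prodMk contDiff_id)
  rw [partial2, iteratedDeriv_const_mul_field, congrFun (iteratedDeriv_comp_const_mul hslice b),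
    partial2, mul_assoc]

noncomputable def parabolicNorm (u : ℝ × ℝ) : ℝ := |u.1| + √|u.2|

noncomputable def parabolicMoment (f : ℝ × ℝ → ℝ) (α : ℝ) : ℝ :=
  ∫ u, |f u| * parabolicNorm u ^ α

lemma parabolicNorm_nonneg (u : ℝ × ℝ) : 0 ≤ parabolicNorm u := by
  unfold parabolicNorm
  positivity

lemma parabolicMoment_nonneg (f : ℝ × ℝ → ℝ) (α : ℝ) : 0 ≤ parabolicMoment f α :=
  integral_nonneg fun u => mul_nonneg (abs_nonneg _) (Real.rpow_nonneg (parabolicNorm_nonneg u) _)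

lemma integral_mul_pd_eq_parabolicMoment (f : ℝ × ℝ → ℝ) (α : ℝ) (x : ℝ × ℝ) :
    ∫ y, |f (x - y)| * pd x y ^ α = parabolicMoment f α :=
  integral_sub_left_eq_self (fun z => |f z| * parabolicNorm z ^ α) volume x

lemma parabolicNorm_dilate {A : ℝ} (hA : 0 < A) (u : ℝ × ℝ) :
    parabolicNorm (A⁻¹ * u.1, (A ^ 2)⁻¹ * u.2) = A⁻¹ * parabolicNorm u := by
  rw [parabolicNorm, parabolicNorm, abs_mul, abs_mul, abs_of_pos (inv_pos.2 hA),
    abs_of_pos (inv_pos.2 (pow_pos hA 2)), Real.sqrt_mul (inv_nonneg.2 (sq_nonneg A)),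
    Real.sqrt_inv, Real.sqrt_sq hA.le, mul_add]

lemma parabolicMoment_dilate (g : ℝ × ℝ → ℝ) (c α : ℝ) {A : ℝ} (hA : 0 < A) :
    parabolicMoment (fun u => c * g (A⁻¹ * u.1, (A ^ 2)⁻¹ * u.2)) α =
      |c| * A ^ 3 * A ^ α * parabolicMoment g α := by
  have hintegrand : ∀ u : ℝ × ℝ, |c * g (A⁻¹ * u.1, (A ^ 2)⁻¹ * u.2)| * parabolicNorm u ^ α =
      (|c| * A ^ α) * (fun v => |g v| * parabolicNorm v ^ α) (A⁻¹ * u.1, (A ^ 2)⁻¹ * u.2) := by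
    intro u
    have hnorm : parabolicNorm u = A * parabolicNorm (A⁻¹ * u.1, (A ^ 2)⁻¹ * u.2) := by
      rw [parabolicNorm_dilate hA, mul_inv_cancel_left₀ hA.ne']
    rw [hnorm, Real.mul_rpow hA.le (parabolicNorm_nonneg _), abs_mul]
    ring
  rw [parabolicMoment, integral_congr_ae (.of_forall hintegrand), integral_const_mul,
    integral_comp_mul_prod (fun v => |g v| * parabolicNorm v ^ α) (inv_ne_zero hA.ne')
      (inv_ne_zero (pow_ne_zero 2 hA.ne')), parabolicMoment, smul_eq_mul,
    ← mul_inv, inv_inv, ← pow_succ', abs_of_pos (pow_pos hA 3)]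
  ring

lemma pker_eq {T : ℝ} (hT : 0 < T) (ψ : ℝ × ℝ → ℝ) :
    pker ψ T = fun x => ((T ^ (1 / 4 : ℝ)) ^ 3)⁻¹ *
      ψ ((T ^ (1 / 4 : ℝ))⁻¹ * x.1, ((T ^ (1 / 4 : ℝ)) ^ 2)⁻¹ * x.2) := by
  have hpow (n : ℕ) : (T ^ (1 / 4 : ℝ)) ^ n = T ^ (n / 4 : ℝ) := by
    rw [← Real.rpow_natCast, ← Real.rpow_mul hT.le]
    ring_nf
  funext x
  rw [pker, hpow, hpow, ← Real.rpow_neg hT.le]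
  norm_num [div_eq_inv_mul]

lemma abs_dilation_factor {A : ℝ} (hA : 0 < A) (m : ℕ) (α : ℝ) :
    |(A ^ 3)⁻¹ * (A ^ m)⁻¹| * A ^ 3 * A ^ α = A ^ (-(m : ℝ) + α) := by
  rw [abs_of_pos (by positivity), Real.rpow_add hA, Real.rpow_neg hA.le, Real.rpow_natCast]
  field_simp

lemma integral_partial1_pker_mul_pd {ψ : ℝ × ℝ → ℝ} {k : ℕ} (hψ : ContDiff ℝ k ψ) {T : ℝ}
    (hT : 0 < T) (α : ℝ) (x : ℝ × ℝ) :
    ∫ y, |partial1 k (pker ψ T) (x - y)| * pd x y ^ α =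
      (T ^ (1 / 4 : ℝ)) ^ (-(k : ℝ) + α) * parabolicMoment (partial1 k ψ) α := by
  set A := T ^ (1 / 4 : ℝ)
  have hA : 0 < A := Real.rpow_pos_of_pos hT _
  have hpartial : partial1 k (pker ψ T) =
      fun z => (A ^ 3)⁻¹ * (A ^ k)⁻¹ * partial1 k ψ (A⁻¹ * z.1, (A ^ 2)⁻¹ * z.2) := by
    funext z
    rw [pker_eq hT, partial1_const_mul_comp_mul hψ, inv_pow]
  rw [integral_mul_pd_eq_parabolicMoment, hpartial, parabolicMoment_dilate _ _ _ hA,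
    abs_dilation_factor hA]

lemma integral_partial2_pker_mul_pd {ψ : ℝ × ℝ → ℝ} {k : ℕ} (hψ : ContDiff ℝ k ψ) {T : ℝ}
    (hT : 0 < T) (α : ℝ) (x : ℝ × ℝ) :
    ∫ y, |partial2 k (pker ψ T) (x - y)| * pd x y ^ α =
      (T ^ (1 / 4 : ℝ)) ^ (-(2 * k : ℝ) + α) * parabolicMoment (partial2 k ψ) α := by
  set A := T ^ (1 / 4 : ℝ)
  have hA : 0 < A := Real.rpow_pos_of_pos hT _
  have hpartial : partial2 k (pker ψ T) =
      fun z => (A ^ 3)⁻¹ * (A ^ (2 * k))⁻¹ * partial2 k ψ (A⁻¹ * z.1, (A ^ 2)⁻¹ * z.2) := by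
    funext z
    rw [pker_eq hT, partial2_const_mul_comp_mul hψ, inv_pow, pow_mul]
  rw [integral_mul_pd_eq_parabolicMoment, hpartial, parabolicMoment_dilate _ _ _ hA,
    abs_dilation_factor hA, Nat.cast_mul, Nat.cast_ofNat]

theorem stmt5_general (ψ₁ : SchwartzMap (ℝ × ℝ) ℝ) (k : ℕ) (α : ℝ) :
    ∃ C : ℝ, 0 < C ∧ ∀ T : ℝ, 0 < T → ∀ x : ℝ × ℝ,
      (∫ y : ℝ × ℝ, |partial1 k (pker (⇑ψ₁) T) (x - y)| * pd x y ^ α) ≤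
        C * (T ^ ((1 : ℝ) / 4)) ^ (-(k : ℝ) + α) ∧
      (∫ y : ℝ × ℝ, |partial2 k (pker (⇑ψ₁) T) (x - y)| * pd x y ^ α) ≤
        C * (T ^ ((1 : ℝ) / 4)) ^ (-(2 * k : ℝ) + α) := by
  set M₁ := parabolicMoment (partial1 k ψ₁) α
  set M₂ := parabolicMoment (partial2 k ψ₁) α
  have hM₁ : 0 ≤ M₁ := parabolicMoment_nonneg _ _
  refine ⟨max M₁ M₂ + 1, by linarith [le_max_left M₁ M₂], fun T hT x => ?_⟩
  rw [integral_partial1_pker_mul_pd (ψ₁.smooth k) hT,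
    integral_partial2_pker_mul_pd (ψ₁.smooth k) hT, mul_comm _ M₁, mul_comm _ M₂]
  constructor <;> gcongr <;> linarith [le_max_left M₁ M₂, le_max_right M₁ M₂]

/-- Moment bounds for derivatives of the parabolically rescaled Schwartz kernel:
`∫ |∂₁^k ψ_T(x−y)| d(x,y)^α dy ≤ C (T^{1/4})^{−k+α}` and
`∫ |∂₂^k ψ_T(x−y)| d(x,y)^α dy ≤ C (T^{1/4})^{−2k+α}`. -/
theorem stmt5 (ψ₁ : SchwartzMap (ℝ × ℝ) ℝ) (k : ℕ) (α : ℝ) (hα : 0 ≤ α) :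
    ∃ C : ℝ, 0 < C ∧ ∀ T : ℝ, 0 < T → ∀ x : ℝ × ℝ,
      (∫ y : ℝ × ℝ, |partial1 k (pker (⇑ψ₁) T) (x - y)| * pd x y ^ α) ≤
        C * (T ^ ((1 : ℝ) / 4)) ^ (-(k : ℝ) + α) ∧
      (∫ y : ℝ × ℝ, |partial2 k (pker (⇑ψ₁) T) (x - y)| * pd x y ^ α) ≤
        C * (T ^ ((1 : ℝ) / 4)) ^ (-(2 * k : ℝ) + α) :=
  stmt5_general ψ₁ k α
end

section
/- With ψ_T the parabolic heat-type kernel on ℝ² satisfying ψ_T(x₁,x₂) = T^{-3/4} ψ₁(x₁/T^{1/4}, x₂/T^{1/2}) for a Schwartz function ψ₁, one has for every α ∈ (0,1): sup_{T≤1} (T^{1/4})^{1−α} ‖[x₁,(·)_T] f‖_∞ ≲ sup_{T≤1} (T^{1/4})^{2−α} ‖f_T‖_∞, where the implicit constant depends only on ψ₁ and α. -/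
/-!
The commutator `x₁ f_T - (x₁ f)_T` is the convolution of `f` with `x₁ ψ_T`. Writing
`ψ_T = ψ_{T/2} ∗ ψ_{T/2}` and splitting `x₁ = (x₁ - y₁) + y₁` inside this convolution square gives
`[x₁, (·)_T] f = 2 (x₁ ψ_{T/2}) ∗ f_{T/2}`. Parabolic scaling gives
`‖x₁ ψ_{T/2}‖_{L¹} = (T/2)^{1/4} ‖x₁ ψ₁‖_{L¹}`, and this factor `(T/2)^{1/4}` is exactly what turns
the bound on `f_{T/2}` into the claimed one.
-/

open MeasureTheory

noncomputable def conv (g f : ℝ × ℝ → ℝ) (x : ℝ × ℝ) : ℝ :=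
  ∫ y : ℝ × ℝ, g (x - y) * f y

section Dilation

variable {a b : ℝ}

lemma measurableEmbedding_div_prod (ha : a ≠ 0) (hb : b ≠ 0) :
    MeasurableEmbedding fun x : ℝ × ℝ => (x.1 / a, x.2 / b) := by
  simp only [div_eq_mul_inv]
  exact (measurableEmbedding_mulRight₀ (inv_ne_zero ha)).prodMap
    (measurableEmbedding_mulRight₀ (inv_ne_zero hb))

lemma map_div_prod_volume (ha : 0 < a) (hb : 0 < b) :
    Measure.map (fun x : ℝ × ℝ => (x.1 / a, x.2 / b)) volume =
      ENNReal.ofReal (a * b) • volume := by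
  have : (fun x : ℝ × ℝ => (x.1 / a, x.2 / b)) = Prod.map (a⁻¹ * ·) (b⁻¹ * ·) := by
    funext x; simp [div_eq_inv_mul, Prod.map]
  rw [this, Measure.volume_eq_prod, ← Measure.map_prod_map _ _ (measurable_const_mul _)
    (measurable_const_mul _), Real.map_volume_mul_left (inv_ne_zero ha.ne'),
    Real.map_volume_mul_left (inv_ne_zero hb.ne'), Measure.prod_smul_left,
    Measure.prod_smul_right, smul_smul, abs_inv, abs_inv, inv_inv, inv_inv, abs_of_pos ha,
    abs_of_pos hb, ENNReal.ofReal_mul ha.le]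

lemma integral_comp_div_prod (ha : 0 < a) (hb : 0 < b) (g : ℝ × ℝ → ℝ) :
    ∫ x : ℝ × ℝ, g (x.1 / a, x.2 / b) = a * b * ∫ x, g x := by
  rw [← (measurableEmbedding_div_prod ha.ne' hb.ne').integral_map, map_div_prod_volume ha hb,
    integral_smul_measure, ENNReal.toReal_ofReal (by positivity), smul_eq_mul]

lemma integrable_comp_div_prod_iff (ha : 0 < a) (hb : 0 < b) {g : ℝ × ℝ → ℝ} :
    Integrable (fun x : ℝ × ℝ => g (x.1 / a, x.2 / b)) ↔ Integrable g := by
  rw [← Function.comp_def, ← (measurableEmbedding_div_prod ha.ne' hb.ne').integrable_map_iff,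
    map_div_prod_volume ha hb, integrable_smul_measure (by simp [ha, hb]) ENNReal.ofReal_ne_top]

end Dilation

section Kernel

variable {g : ℝ × ℝ → ℝ} {T : ℝ}

lemma integrable_pker (hT : 0 < T) (hg : Integrable g) : Integrable (pker g T) :=
  ((integrable_comp_div_prod_iff (by positivity) (by positivity)).2 hg).const_mul _

lemma integral_pker (hT : 0 < T) (g : ℝ × ℝ → ℝ) : ∫ x, pker g T x = ∫ x, g x := by
  have hscale : T ^ (-(3 / 4 : ℝ)) * (T ^ ((1 : ℝ) / 4) * T ^ ((1 : ℝ) / 2)) = 1 := by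
    rw [← Real.rpow_add hT, ← Real.rpow_add hT]; norm_num
  simp only [pker]
  rw [integral_const_mul, integral_comp_div_prod (by positivity) (by positivity),
    ← mul_assoc, hscale, one_mul]

lemma abs_pker (hT : 0 < T) (x : ℝ × ℝ) : |pker g T x| = pker (fun u => |g u|) T x := by
  rw [pker, pker, abs_mul, abs_of_pos (by positivity)]

lemma fst_mul_pker (hT : 0 < T) (x : ℝ × ℝ) :
    x.1 * pker g T x = T ^ ((1 : ℝ) / 4) * pker (fun u => u.1 * g u) T x := by
  have : T ^ ((1 : ℝ) / 4) ≠ 0 := by positivity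
  simp only [pker]
  field_simp

lemma integral_abs_fst_mul_pker (hT : 0 < T) :
    ∫ x, |x.1 * pker g T x| = T ^ ((1 : ℝ) / 4) * ∫ u, |u.1 * g u| := by
  simp_rw [fst_mul_pker hT, abs_mul, abs_of_pos (by positivity : 0 < T ^ ((1 : ℝ) / 4)),
    abs_pker hT, integral_const_mul, integral_pker hT, abs_mul]

lemma integrable_fst_mul_pker (hT : 0 < T) (hg : Integrable fun u => u.1 * g u) :
    Integrable fun x => x.1 * pker g T x := by
  simp_rw [fst_mul_pker hT]
  exact (integrable_pker hT hg).const_mul _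

end Kernel

lemma SchwartzMap.integrable_fst_mul (ψ : SchwartzMap (ℝ × ℝ) ℝ) :
    Integrable fun u : ℝ × ℝ => u.1 * ψ u := by
  refine (ψ.integrable_pow_mul volume 1).mono' (by fun_prop) (ae_of_all _ fun u => ?_)
  simpa [abs_mul] using mul_le_mul_of_nonneg_right (norm_fst_le u) (norm_nonneg (ψ u))

lemma exists_bound_of_continuous_of_periodic {f : ℝ × ℝ → ℝ} (hf : Continuous f)
    (hper : ∀ x : ℝ × ℝ, ∀ m n : ℤ, f (x.1 + m, x.2 + n) = f x) :
    ∃ B, ∀ x, |f x| ≤ B := by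
  obtain ⟨B, hB⟩ := (isCompact_Icc.prod isCompact_Icc).exists_bound_of_continuousOn
    (s := Set.Icc (0 : ℝ) 1 ×ˢ Set.Icc (0 : ℝ) 1) hf.continuousOn
  refine ⟨B, fun x => ?_⟩
  have hfract := hper (Int.fract x.1, Int.fract x.2) ⌊x.1⌋ ⌊x.2⌋
  simp only [Int.fract_add_floor] at hfract
  rw [← Prod.mk.eta (p := x), hfract]
  exact hB _ ⟨⟨Int.fract_nonneg _, (Int.fract_lt_one _).le⟩,
    ⟨Int.fract_nonneg _, (Int.fract_lt_one _).le⟩⟩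

section Convolution

variable {f g h : ℝ × ℝ → ℝ} {B : ℝ}

lemma conv_eq_integral_sub (g f : ℝ × ℝ → ℝ) (x : ℝ × ℝ) :
    conv g f x = ∫ y, g y * f (x - y) := by
  rw [conv, ← integral_sub_left_eq_self _ volume x]
  simp only [sub_sub_cancel]

lemma abs_conv_le (hg : Integrable g) (hB : ∀ y, |f y| ≤ B) (x : ℝ × ℝ) :
    |conv g f x| ≤ (∫ y, |g y|) * B := by
  rw [conv_eq_integral_sub, ← integral_mul_const B, ← Real.norm_eq_abs]
  refine norm_integral_le_of_norm_le (hg.abs.mul_const B) (ae_of_all _ fun y => ?_)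
  rw [Real.norm_eq_abs, abs_mul]
  exact mul_le_mul_of_nonneg_left (hB _) (abs_nonneg _)

lemma fst_mul_conv_sub_conv_fst_mul (hg : Integrable g) (hg₁ : Integrable fun z => z.1 * g z)
    (hf : Measurable f) (hB : ∀ y, |f y| ≤ B) (x : ℝ × ℝ) :
    x.1 * conv g f x - conv g (fun y => y.1 * f y) x = conv (fun z => z.1 * g z) f x := by
  have hi : Integrable fun y => g (x - y) * f y :=
    (hg.comp_sub_left x).mul_bdd hf.aestronglyMeasurable (ae_of_all _ hB)
  have hi₁ : Integrable fun y => (x - y).1 * g (x - y) * f y :=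
    (hg₁.comp_sub_left x).mul_bdd hf.aestronglyMeasurable (ae_of_all _ hB)
  have : conv g (fun y => y.1 * f y) x = x.1 * conv g f x - conv (fun z => z.1 * g z) f x := by
    rw [conv, conv, conv, ← integral_const_mul, ← integral_sub (hi.const_mul _) hi₁]
    congr 1; funext y; simp only [Prod.fst_sub]; ring
  linarith

lemma integrable_mul_prod_mul_sub (hg : Integrable g) (hh : Integrable h) (hf : Measurable f)
    (hB : ∀ y, |f y| ≤ B) (x : ℝ × ℝ) :
    Integrable (fun p : (ℝ × ℝ) × (ℝ × ℝ) => g p.1 * h p.2 * f (x - p.1 - p.2)) :=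
  (hg.mul_prod hh).mul_bdd (hf.comp (by fun_prop)).aestronglyMeasurable
    (ae_of_all _ fun _ => hB _)

lemma conv_conv_eq_integral_prod (hg : Integrable g) (hh : Integrable h) (hf : Measurable f)
    (hB : ∀ y, |f y| ≤ B) (x : ℝ × ℝ) :
    conv g (conv h f) x = ∫ p : (ℝ × ℝ) × (ℝ × ℝ), g p.1 * h p.2 * f (x - p.1 - p.2) := by
  refine ((integral_prod _ (integrable_mul_prod_mul_sub hg hh hf hB x)).trans ?_).symm
  rw [conv_eq_integral_sub]
  congr 1; funext u
  rw [conv_eq_integral_sub, ← integral_const_mul]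
  simp only [mul_assoc]

lemma conv_conv_comm (hg : Integrable g) (hh : Integrable h) (hf : Measurable f)
    (hB : ∀ y, |f y| ≤ B) (x : ℝ × ℝ) :
    conv g (conv h f) x = conv h (conv g f) x := by
  rw [conv_conv_eq_integral_prod hg hh hf hB, conv_conv_eq_integral_prod hh hg hf hB]
  refine Eq.trans ?_ (integral_prod_swap _)
  congr 1; funext p
  simp only [Prod.fst_swap, Prod.snd_swap, sub_right_comm x p.1 p.2]
  ring

lemma conv_fst_mul_of_conv_self_eq (hg : ∀ z, conv h h z = g z) (hh : Integrable h)
    (hh₁ : Integrable fun z => z.1 * h z) (hf : Measurable f) (hB : ∀ y, |f y| ≤ B)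
    (x : ℝ × ℝ) :
    conv (fun z => z.1 * g z) f x = 2 * conv (fun z => z.1 * h z) (conv h f) x := by
  set F : (ℝ × ℝ) × (ℝ × ℝ) → ℝ := fun p => p.2.1 * f (x - p.2) * (h (p.2 - p.1) * h p.1)
  have hshear : MeasurePreserving (fun p : (ℝ × ℝ) × (ℝ × ℝ) => (p.1, p.1 + p.2)) volume volume :=
    measurePreserving_prod_add volume volume
  have hshear_emb : MeasurableEmbedding fun p : (ℝ × ℝ) × (ℝ × ℝ) => (p.1, p.1 + p.2) :=
    (MeasurableEquiv.shearAddRight (ℝ × ℝ)).measurableEmbedding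
  -- in the coordinates `z = w + u` the weight splits as `z₁ = u₁ + w₁`
  have hF_shear : (fun p : (ℝ × ℝ) × (ℝ × ℝ) => F (p.1, p.1 + p.2)) = fun p =>
      h p.1 * (p.2.1 * h p.2) * f (x - p.1 - p.2) + p.1.1 * h p.1 * h p.2 * f (x - p.1 - p.2) := by
    funext p
    simp only [F, Prod.fst_add, add_sub_cancel_left, sub_add_eq_sub_sub]
    ring
  have hi := (integrable_mul_prod_mul_sub hh hh₁ hf hB x).add
    (integrable_mul_prod_mul_sub hh₁ hh hf hB x)
  have hF : Integrable F := by
    rw [← hshear.integrable_comp_emb hshear_emb, Function.comp_def, hF_shear]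
    exact hi
  calc conv (fun z => z.1 * g z) f x
      = ∫ z, ∫ w, F (w, z) := by
        rw [conv_eq_integral_sub]
        congr 1; funext z
        rw [← hg z, conv, ← integral_const_mul, ← integral_mul_const]
        congr 1; funext w; ring
    _ = ∫ p, F p := (integral_prod_symm F hF).symm
    _ = ∫ p : (ℝ × ℝ) × (ℝ × ℝ), F (p.1, p.1 + p.2) :=
        (hshear.integral_comp hshear_emb F).symm
    _ = conv h (conv (fun z => z.1 * h z) f) x + conv (fun z => z.1 * h z) (conv h f) x := by
        rw [hF_shear, integral_add (integrable_mul_prod_mul_sub hh hh₁ hf hB x)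
          (integrable_mul_prod_mul_sub hh₁ hh hf hB x), conv_conv_eq_integral_prod hh hh₁ hf hB,
          conv_conv_eq_integral_prod hh₁ hh hf hB]
    _ = 2 * conv (fun z => z.1 * h z) (conv h f) x := by
        rw [conv_conv_comm hh hh₁ hf hB]
        ring

end Convolution

lemma div_two_rpow_quarter_rpow {T : ℝ} (hT : 0 ≤ T) (β : ℝ) :
    ((T / 2) ^ ((1 : ℝ) / 4)) ^ β = 2 ^ (-β / 4) * (T ^ ((1 : ℝ) / 4)) ^ β := by
  rw [Real.div_rpow hT zero_le_two, Real.div_rpow (by positivity) (by positivity),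
    ← Real.rpow_mul zero_le_two, div_eq_mul_inv, ← Real.rpow_neg zero_le_two]
  ring_nf

theorem stmt10_general (ψ₁ : SchwartzMap (ℝ × ℝ) ℝ) (α : ℝ)
    (hsemi : ∀ T : ℝ, 0 < T → ∀ x : ℝ × ℝ,
      (∫ y : ℝ × ℝ, pker (⇑ψ₁) (T / 2) (x - y) * pker (⇑ψ₁) (T / 2) y) =
        pker (⇑ψ₁) T x) :
    ∃ C : ℝ, 0 < C ∧ ∀ f : ℝ × ℝ → ℝ, Continuous f →
      (∀ x : ℝ × ℝ, ∀ m n : ℤ, f (x.1 + m, x.2 + n) = f x) →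
      ∀ N₀ : ℝ, 0 ≤ N₀ →
      (∀ T : ℝ, 0 < T → T ≤ 1 → ∀ x : ℝ × ℝ,
        |conv (pker (⇑ψ₁) T) f x| ≤ N₀ * (T ^ ((1 : ℝ) / 4)) ^ (α - 2)) →
      ∀ T : ℝ, 0 < T → T ≤ 1 → ∀ x : ℝ × ℝ,
        |x.1 * conv (pker (⇑ψ₁) T) f x - conv (pker (⇑ψ₁) T) (fun y => y.1 * f y) x| ≤
          C * N₀ * (T ^ ((1 : ℝ) / 4)) ^ (α - 1) := by
  set M₁ := ∫ u, |u.1 * ψ₁ u|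
  have hM₁ : 0 ≤ M₁ := integral_nonneg fun u => abs_nonneg _
  refine ⟨2 * 2 ^ ((1 - α) / 4) * M₁ + 1, by positivity, ?_⟩
  intro f hf hper N₀ hN₀ hN T hT hT1 x
  obtain ⟨B, hB⟩ := exists_bound_of_continuous_of_periodic hf hper
  have hT2 : 0 < T / 2 := by positivity
  have hK₁ := integrable_fst_mul_pker hT2 ψ₁.integrable_fst_mul
  have hconv_bound := abs_conv_le hK₁ (hN (T / 2) hT2 (by linarith)) x
  rw [integral_abs_fst_mul_pker hT2] at hconv_bound
  rw [fst_mul_conv_sub_conv_fst_mul (integrable_pker hT ψ₁.integrable)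
      (integrable_fst_mul_pker hT ψ₁.integrable_fst_mul) hf.measurable hB,
    conv_fst_mul_of_conv_self_eq (hsemi T hT) (integrable_pker hT2 ψ₁.integrable) hK₁
      hf.measurable hB,
    abs_mul, abs_two]
  have hs_pow : (T / 2) ^ ((1 : ℝ) / 4) * ((T / 2) ^ ((1 : ℝ) / 4)) ^ (α - 2) =
      2 ^ ((1 - α) / 4) * (T ^ ((1 : ℝ) / 4)) ^ (α - 1) := by
    rw [mul_comm, ← Real.rpow_add_one (by positivity), div_two_rpow_quarter_rpow hT.le]
    ring_nf
  have ht : 0 ≤ N₀ * (T ^ ((1 : ℝ) / 4)) ^ (α - 1) := by positivity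
  calc 2 * |conv (fun z => z.1 * pker ψ₁ (T / 2) z) (conv (pker ψ₁ (T / 2)) f) x|
      ≤ 2 * ((T / 2) ^ ((1 : ℝ) / 4) * M₁ * (N₀ * ((T / 2) ^ ((1 : ℝ) / 4)) ^ (α - 2))) := by
        gcongr
    _ = 2 * 2 ^ ((1 - α) / 4) * M₁ * (N₀ * (T ^ ((1 : ℝ) / 4)) ^ (α - 1)) := by
        linear_combination 2 * M₁ * N₀ * hs_pow
    _ ≤ (2 * 2 ^ ((1 - α) / 4) * M₁ + 1) * N₀ * (T ^ ((1 : ℝ) / 4)) ^ (α - 1) := by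
        linarith

/-- For the parabolically rescaled Schwartz kernel with the convolution semigroup
property, and every `α ∈ (0,1)`, one has
`sup_{T≤1} (T^{1/4})^{1−α} ‖[x₁,(·)_T] f‖ ≲ sup_{T≤1} (T^{1/4})^{2−α} ‖f_T‖`
for periodic `f`, where `[x₁,(·)_T] f = x₁ f_T − (x₁ f)_T`. -/
theorem stmt10 (ψ₁ : SchwartzMap (ℝ × ℝ) ℝ) (α : ℝ) (hα : 0 < α ∧ α < 1)
    (hsemi : ∀ T : ℝ, 0 < T → ∀ x : ℝ × ℝ,
      (∫ y : ℝ × ℝ, pker (⇑ψ₁) (T / 2) (x - y) * pker (⇑ψ₁) (T / 2) y) =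
        pker (⇑ψ₁) T x) :
    ∃ C : ℝ, 0 < C ∧ ∀ f : ℝ × ℝ → ℝ, Continuous f →
      (∀ x : ℝ × ℝ, ∀ m n : ℤ, f (x.1 + m, x.2 + n) = f x) →
      ∀ N₀ : ℝ, 0 ≤ N₀ →
      (∀ T : ℝ, 0 < T → T ≤ 1 → ∀ x : ℝ × ℝ,
        |conv (pker (⇑ψ₁) T) f x| ≤ N₀ * (T ^ ((1 : ℝ) / 4)) ^ (α - 2)) →
      ∀ T : ℝ, 0 < T → T ≤ 1 → ∀ x : ℝ × ℝ,
        |x.1 * conv (pker (⇑ψ₁) T) f x - conv (pker (⇑ψ₁) T) (fun y => y.1 * f y) x| ≤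
          C * N₀ * (T ^ ((1 : ℝ) / 4)) ^ (α - 1) :=
  stmt10_general ψ₁ α hsemi
end

section
/- Let α ∈ (0,1), λ₁, λ₂ ∈ ℝ with λ₁ + λ₂ = −1 + 2α and λ₁ < 1, λ₂/2 < 1. Then the integral ∫_{ℝ²} (min{1, |h₁| + |h₂|}/(h₁² + |h₂|))² · (|h₁|⁴ + |h₂|²)^{(κ₁+κ₂)/2} / (|h₁|^{λ₁} |h₂|^{λ₂/2}) dh is finite for all sufficiently small κ₁, κ₂ ≥ 0. -/
open MeasureTheory Set Real

/-- `|x|^a` is integrable near 0 when `a > -1`. -/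
lemma int_small {a : ℝ} (ha : -1 < a) :
    IntegrableOn (fun x : ℝ => |x| ^ a) {x : ℝ | |x| ≤ 1} := by
  have h0 : IntegrableOn (fun x : ℝ => |x| ^ a) (Ioo (0 : ℝ) 1) := by
    refine ((intervalIntegral.integrableOn_Ioo_rpow_iff one_pos).2 ha).congr_fun
      (fun x hx => ?_) measurableSet_Ioo
    rw [abs_of_pos hx.1]
  have hneg : IntegrableOn (fun x : ℝ => |x| ^ a) (Ioo (-1 : ℝ) 0) := by
    have h := ((Measure.measurePreserving_neg (volume : Measure ℝ)).integrableOn_comp_preimage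
      (Homeomorph.neg ℝ).measurableEmbedding).2 h0
    have hset : (Neg.neg ⁻¹' Ioo (0 : ℝ) 1 : Set ℝ) = Ioo (-1 : ℝ) 0 := by
      ext x
      simp only [mem_preimage, mem_Ioo]
      constructor <;> rintro ⟨h1, h2⟩ <;> constructor <;> linarith
    rw [hset] at h
    refine h.congr_fun (fun x _ => ?_) measurableSet_Ioo
    simp [Function.comp, abs_neg]
  have hu : IntegrableOn (fun x : ℝ => |x| ^ a) (Ioo (-1 : ℝ) 0 ∪ Ioo 0 1) := hneg.union h0
  refine hu.mono_set_ae (ae_le_set.2 (measure_mono_null (fun x hx => ?_)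
    (Set.Finite.measure_zero (Set.toFinite ({-1, 0, 1} : Set ℝ)) volume)))
  obtain ⟨hx1, hx2⟩ := hx
  simp only [mem_setOf_eq, abs_le] at hx1
  simp only [mem_union, mem_Ioo, not_or, not_and_or, not_lt] at hx2
  obtain ⟨h1, h2⟩ := hx2
  simp only [mem_insert_iff, mem_singleton_iff]
  rcases lt_trichotomy x 0 with h | h | h
  · rcases h1 with h1 | h1
    · left; linarith
    · linarith
  · right; left; exact h
  · rcases h2 with h2 | h2
    · linarith
    · right; right; linarith

/-- `|x|^a` is integrable at infinity when `a < -1`. -/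
lemma int_large {a : ℝ} (ha : a < -1) :
    IntegrableOn (fun x : ℝ => |x| ^ a) {x : ℝ | 1 < |x|} := by
  have h0 : IntegrableOn (fun x : ℝ => |x| ^ a) (Ioi (1 : ℝ)) := by
    refine ((integrableOn_Ioi_rpow_iff one_pos).2 ha).congr_fun
      (fun x hx => ?_) measurableSet_Ioi
    rw [abs_of_pos (lt_trans one_pos hx)]
  have hneg : IntegrableOn (fun x : ℝ => |x| ^ a) (Iio (-1 : ℝ)) := by
    have h := ((Measure.measurePreserving_neg (volume : Measure ℝ)).integrableOn_comp_preimage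
      (Homeomorph.neg ℝ).measurableEmbedding).2 h0
    have hset : (Neg.neg ⁻¹' Ioi (1 : ℝ) : Set ℝ) = Iio (-1 : ℝ) := by
      ext x
      simp only [mem_preimage, mem_Ioi, mem_Iio]
      constructor <;> intro <;> linarith
    rw [hset] at h
    refine h.congr_fun (fun x _ => ?_) measurableSet_Iio
    simp [Function.comp, abs_neg]
  have hseteq : {x : ℝ | 1 < |x|} = Iio (-1 : ℝ) ∪ Ioi 1 := by
    ext x
    simp only [mem_setOf_eq, mem_union, mem_Iio, mem_Ioi, lt_abs]
    constructor <;> rintro (h | h)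
    · right; exact h
    · left; linarith
    · right; linarith
    · left; exact h
  rw [hseteq]
  exact hneg.union h0

/-- Integrability on a rectangle by comparison with a product function. -/
lemma regional {F : ℝ × ℝ → ℝ} (hF : AEStronglyMeasurable F volume) {s t : Set ℝ}
    (hs : MeasurableSet s) (ht : MeasurableSet t) {f g : ℝ → ℝ} {C : ℝ}
    (hf : IntegrableOn f s) (hg : IntegrableOn g t)
    (hbd : ∀ h : ℝ × ℝ, h.1 ≠ 0 → h.2 ≠ 0 → h ∈ s ×ˢ t → |F h| ≤ C * (f h.1 * g h.2)) :
    IntegrableOn F (s ×ˢ t) := by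
  have hG : IntegrableOn (fun h : ℝ × ℝ => C * (f h.1 * g h.2)) (s ×ˢ t) := by
    rw [IntegrableOn, Measure.volume_eq_prod, ← Measure.prod_restrict]
    exact (hf.mul_prod hg).const_mul C
  have hae1 : ∀ᵐ h : ℝ × ℝ ∂(volume : Measure (ℝ × ℝ)), h.1 ≠ 0 := by
    rw [ae_iff]
    have heq : {h : ℝ × ℝ | ¬h.1 ≠ 0} = ({(0 : ℝ)} : Set ℝ) ×ˢ (univ : Set ℝ) := by
      ext ⟨a, b⟩; simp [eq_comm]
    rw [heq, Measure.volume_eq_prod, Measure.prod_prod]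
    simp
  have hae2 : ∀ᵐ h : ℝ × ℝ ∂(volume : Measure (ℝ × ℝ)), h.2 ≠ 0 := by
    rw [ae_iff]
    have heq : {h : ℝ × ℝ | ¬h.2 ≠ 0} = (univ : Set ℝ) ×ˢ ({(0 : ℝ)} : Set ℝ) := by
      ext ⟨a, b⟩; simp [eq_comm]
    rw [heq, Measure.volume_eq_prod, Measure.prod_prod]
    simp
  refine Integrable.mono hG hF.restrict ?_
  filter_upwards [ae_restrict_mem (hs.prod ht), ae_restrict_of_ae hae1,
    ae_restrict_of_ae hae2] with h hmem hn1 hn2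
  rw [Real.norm_eq_abs, Real.norm_eq_abs]
  exact (hbd h hn1 hn2 hmem).trans (le_abs_self _)

/-- The master pointwise bound. -/
lemma bd_main (lam₁ mu κ θ C p : ℝ) (hθ0 : 0 ≤ θ) (hθ1 : θ ≤ 1) (hC : 0 ≤ C)
    (hκ0 : 0 ≤ κ) (hkp : κ - p ≤ 0) {x y : ℝ} (hx : 0 < x) (hy : 0 < y)
    (hm : min 1 (x + y) ^ 2 ≤ C * (x ^ 2 + y) ^ (2 - p)) :
    min 1 (x + y) ^ 2 / (x ^ 2 + y) ^ 2 * (x ^ 4 + y ^ 2) ^ (κ / 2) / (x ^ lam₁ * y ^ mu)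
      ≤ C * (x ^ (2 * θ * (κ - p) - lam₁) * y ^ ((1 - θ) * (κ - p) - mu)) := by
  have hd : (0 : ℝ) < x ^ 2 + y := by positivity
  have hP : (0 : ℝ) < x ^ lam₁ * y ^ mu := by positivity
  have hN : (x ^ 4 + y ^ 2) ^ (κ / 2) ≤ (x ^ 2 + y) ^ κ := by
    have h1 : x ^ 4 + y ^ 2 ≤ (x ^ 2 + y) ^ 2 := by
      nlinarith [mul_nonneg (sq_nonneg x) hy.le]
    calc (x ^ 4 + y ^ 2) ^ (κ / 2) ≤ ((x ^ 2 + y) ^ 2) ^ (κ / 2) :=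
          Real.rpow_le_rpow (by positivity) h1 (by positivity)
      _ = (x ^ 2 + y) ^ κ := by
          rw [← Real.rpow_natCast (x ^ 2 + y) 2, ← Real.rpow_mul hd.le]
          congr 1
          push_cast
          ring
  have hAM : x ^ (2 * θ) * y ^ (1 - θ) ≤ x ^ 2 + y := by
    have hgm : ((x ^ 2 : ℝ)) ^ θ * y ^ (1 - θ) ≤ θ * x ^ 2 + (1 - θ) * y :=
      Real.geom_mean_le_arith_mean2_weighted hθ0 (by linarith) (by positivity) hy.le (by ring)
    have h3 : ((x ^ 2 : ℝ)) ^ θ = x ^ (2 * θ) := by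
      rw [← Real.rpow_natCast x 2, ← Real.rpow_mul hx.le]
      norm_num
    rw [h3] at hgm
    nlinarith [mul_nonneg hθ0 hy.le, mul_nonneg (sub_nonneg.2 hθ1) (sq_nonneg x)]
  have hAMpos : (0 : ℝ) < x ^ (2 * θ) * y ^ (1 - θ) := by positivity
  have hd2ne : ((x ^ 2 + y : ℝ) ^ (2 : ℕ)) ≠ 0 := by positivity
  have hPne : (x ^ lam₁ * y ^ mu : ℝ) ≠ 0 := ne_of_gt hP
  calc min 1 (x + y) ^ 2 / (x ^ 2 + y) ^ 2 * (x ^ 4 + y ^ 2) ^ (κ / 2) / (x ^ lam₁ * y ^ mu)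
      = min 1 (x + y) ^ 2 * (x ^ 4 + y ^ 2) ^ (κ / 2)
          / ((x ^ 2 + y) ^ 2 * (x ^ lam₁ * y ^ mu)) := by
        rw [div_mul_eq_mul_div, div_div]
    _ ≤ C * (x ^ 2 + y) ^ (2 - p) * (x ^ 2 + y) ^ κ
          / ((x ^ 2 + y) ^ 2 * (x ^ lam₁ * y ^ mu)) := by
        gcongr
    _ = C * ((x ^ 2 + y) ^ (κ - p) / (x ^ lam₁ * y ^ mu)) := by
        have e1 : (x ^ 2 + y : ℝ) ^ (2 - p) * (x ^ 2 + y) ^ κ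
            = (x ^ 2 + y) ^ (κ - p) * (x ^ 2 + y) ^ (2 : ℕ) := by
          rw [← Real.rpow_natCast (x ^ 2 + y) 2, ← Real.rpow_add hd, ← Real.rpow_add hd]
          congr 1
          push_cast
          ring
        rw [mul_assoc, e1]
        field_simp
    _ ≤ C * ((x ^ (2 * θ) * y ^ (1 - θ)) ^ (κ - p) / (x ^ lam₁ * y ^ mu)) := by
        refine mul_le_mul_of_nonneg_left ?_ hC
        exact (div_le_div_iff_of_pos_right hP).2 (Real.rpow_le_rpow_of_nonpos hAMpos hAM hkp)
    _ = C * (x ^ (2 * θ * (κ - p) - lam₁) * y ^ ((1 - θ) * (κ - p) - mu)) := by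
        rw [Real.mul_rpow (by positivity) (by positivity), ← Real.rpow_mul hx.le,
          ← Real.rpow_mul hy.le, Real.rpow_sub hx, Real.rpow_sub hy, div_mul_div_comm]

/-- Wrapper for the pointwise bound in terms of a point of `ℝ × ℝ`. -/
lemma bd_wrap (lam₁ mu κ θ C p : ℝ) (hθ0 : 0 ≤ θ) (hθ1 : θ ≤ 1) (hC : 0 ≤ C)
    (hκ0 : 0 ≤ κ) (hkp : κ - p ≤ 0) (h : ℝ × ℝ) (hn1 : h.1 ≠ 0) (hn2 : h.2 ≠ 0)
    (hm : min 1 (|h.1| + |h.2|) ^ 2 ≤ C * (|h.1| ^ 2 + |h.2|) ^ (2 - p)) :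
    |(min 1 (|h.1| + |h.2|) / (h.1 ^ 2 + |h.2|)) ^ 2 * (|h.1| ^ 4 + |h.2| ^ 2) ^ (κ / 2)
        / (|h.1| ^ lam₁ * |h.2| ^ mu)|
      ≤ C * (|h.1| ^ (2 * θ * (κ - p) - lam₁) * |h.2| ^ ((1 - θ) * (κ - p) - mu)) := by
  have hx : 0 < |h.1| := abs_pos.2 hn1
  have hy : 0 < |h.2| := abs_pos.2 hn2
  rw [abs_of_nonneg (by positivity), div_pow, ← sq_abs h.1]
  exact bd_main lam₁ mu κ θ C p hθ0 hθ1 hC hκ0 hkp hx hy hm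

/-- Small-region bound for the min term. -/
lemma minsq_le {x y : ℝ} (hx0 : 0 ≤ x) (hy0 : 0 ≤ y) (hx1 : x ≤ 1) (hy1 : y ≤ 1) :
    min 1 (x + y) ^ 2 ≤ 3 * (x ^ 2 + y) := by
  have hm0 : 0 ≤ min 1 (x + y) := le_min zero_le_one (by positivity)
  have hmle : min 1 (x + y) ≤ x + y := min_le_right _ _
  have hsq : min 1 (x + y) ^ 2 ≤ (x + y) ^ 2 := pow_le_pow_left₀ hm0 hmle 2
  nlinarith [mul_nonneg (sub_nonneg.2 hx1) hy0, mul_nonneg hy0 (sub_nonneg.2 hy1),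
    mul_nonneg hx0 hy0]

/-- Choice of interpolation parameter for the small-small region. -/
lemma paramA {α lam₁ mu κ : ℝ} (hα0 : 0 < α) (hα1 : α < 1)
    (hl : lam₁ + 2 * mu = -1 + 2 * α) (hmu : mu < 1) (h1 : lam₁ < 1)
    (hκ0 : 0 ≤ κ) (hκα : κ ≤ α / 2) :
    ∃ θ : ℝ, 0 ≤ θ ∧ θ ≤ 1 ∧ -1 < 2 * θ * (κ - 1) - lam₁ ∧ -1 < (1 - θ) * (κ - 1) - mu := by
  refine ⟨(max 0 mu + min 1 ((1 - lam₁) / 2)) / 2, ?_, ?_, ?_, ?_⟩ <;>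
  · have hmax0 : (0 : ℝ) ≤ max 0 mu := le_max_left _ _
    have hmaxmu : mu ≤ max 0 mu := le_max_right _ _
    have hmax1 : max 0 mu ≤ 1 := max_le (by norm_num) hmu.le
    have hmin1 : min 1 ((1 - lam₁) / 2) ≤ 1 := min_le_left _ _
    have hminl : min 1 ((1 - lam₁) / 2) ≤ (1 - lam₁) / 2 := min_le_right _ _
    have hmaxlt : max 0 mu < min 1 ((1 - lam₁) / 2) := by
      apply max_lt
      · exact lt_min one_pos (by linarith)
      · exact lt_min (by linarith) (by linarith)
    set θ : ℝ := (max 0 mu + min 1 ((1 - lam₁) / 2)) / 2 with hθ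
    have hA0 : 0 ≤ θ := by rw [hθ]; linarith
    have hA1 : θ ≤ 1 := by rw [hθ]; linarith
    have hA2 : mu < θ := by rw [hθ]; linarith
    have hA3 : 2 * θ < 1 - lam₁ := by rw [hθ]; linarith
    first
      | exact hA0
      | exact hA1
      | nlinarith [mul_nonneg hA0 hκ0]
      | nlinarith [mul_nonneg (by linarith : (0 : ℝ) ≤ 1 - θ) hκ0]

/-- Choice of interpolation parameter for the large-large region. -/
lemma paramD {α lam₁ mu κ : ℝ} (hα0 : 0 < α) (hα1 : α < 1)
    (hl : lam₁ + 2 * mu = -1 + 2 * α) (hmu : mu < 1) (h1 : lam₁ < 1)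
    (hκ0 : 0 ≤ κ) (hκα : κ ≤ α / 2) :
    ∃ θ : ℝ, 0 ≤ θ ∧ θ ≤ 1 ∧ 2 * θ * (κ - 2) - lam₁ < -1 ∧ (1 - θ) * (κ - 2) - mu < -1 := by
  have hc : (0 : ℝ) < 2 - α / 2 := by linarith
  obtain ⟨l, hl0, hlc⟩ : ∃ l : ℝ, 0 < l ∧ l * (2 * (2 - α / 2)) = 1 - lam₁ :=
    ⟨(1 - lam₁) / (2 * (2 - α / 2)), div_pos (by linarith) (by positivity),
      div_mul_cancel₀ _ (by positivity)⟩
  obtain ⟨v, hv0, hvc⟩ : ∃ v : ℝ, 0 < v ∧ v * (2 - α / 2) = 1 - mu :=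
    ⟨(1 - mu) / (2 - α / 2), div_pos (by linarith) hc, div_mul_cancel₀ _ (ne_of_gt hc)⟩
  have hlu : l < 1 - v := by nlinarith [hlc, hvc, hc]
  refine ⟨(l + (1 - v)) / 2, by linarith, by linarith, ?_, ?_⟩
  · nlinarith [hlc, mul_pos (by linarith : (0 : ℝ) < 1 - v - l) hc,
      mul_nonneg (by linarith : (0 : ℝ) ≤ l + (1 - v)) (by linarith : (0 : ℝ) ≤ α / 2 - κ)]
  · nlinarith [hvc, mul_pos (by linarith : (0 : ℝ) < 1 - v - l) hc,
      mul_nonneg (by linarith : (0 : ℝ) ≤ 1 + v - l) (by linarith : (0 : ℝ) ≤ α / 2 - κ)]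

/-- Convergence of the key singular integral: with `λ₁ + λ₂ = −1 + 2α`,
`λ₁ < 1`, `λ₂/2 < 1` and `α ∈ (0,1)`, the integral
`∫ (min{1,|h₁|+|h₂|}/(h₁²+|h₂|))² (|h₁|⁴+|h₂|²)^{(κ₁+κ₂)/2} / (|h₁|^{λ₁}|h₂|^{λ₂/2}) dh`
over `ℝ²` is finite for all sufficiently small `κ₁, κ₂ ≥ 0`. -/
theorem stmt17 (α lam₁ lam₂ : ℝ) (hα : 0 < α ∧ α < 1)
    (hsum : lam₁ + lam₂ = -1 + 2 * α) (h1 : lam₁ < 1) (h2 : lam₂ / 2 < 1) :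
    ∃ κ₀ : ℝ, 0 < κ₀ ∧ ∀ κ₁ κ₂ : ℝ, 0 ≤ κ₁ → 0 ≤ κ₂ → κ₁ + κ₂ ≤ κ₀ →
      Integrable (fun h : ℝ × ℝ =>
        (min 1 (|h.1| + |h.2|) / (h.1 ^ 2 + |h.2|)) ^ 2
          * (|h.1| ^ 4 + |h.2| ^ 2) ^ ((κ₁ + κ₂) / 2)
          / (|h.1| ^ lam₁ * |h.2| ^ (lam₂ / 2))) := by
  obtain ⟨hα0, hα1⟩ := hα
  refine ⟨α / 2, by linarith, ?_⟩
  intro κ₁ κ₂ hk1 hk2 hkle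
  set mu := lam₂ / 2 with hmudef
  set κ := κ₁ + κ₂ with hκdef
  have hmul : mu < 1 := h2
  have hlamsum : lam₁ + 2 * mu = -1 + 2 * α := by rw [hmudef]; linarith
  have hmug : α - 1 < mu := by linarith
  have hlamg : 2 * α - 3 < lam₁ := by linarith
  have hκ0 : 0 ≤ κ := by rw [hκdef]; linarith
  have hκα : κ ≤ α / 2 := hkle
  have hFmeas : AEStronglyMeasurable (fun h : ℝ × ℝ =>
      (min 1 (|h.1| + |h.2|) / (h.1 ^ 2 + |h.2|)) ^ 2 * (|h.1| ^ 4 + |h.2| ^ 2) ^ (κ / 2)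
        / (|h.1| ^ lam₁ * |h.2| ^ mu)) (volume : Measure (ℝ × ℝ)) := by
    apply Measurable.aestronglyMeasurable
    fun_prop
  have hS : MeasurableSet {x : ℝ | |x| ≤ 1} := measurableSet_le measurable_abs measurable_const
  have hL : MeasurableSet {x : ℝ | 1 < |x|} := measurableSet_lt measurable_const measurable_abs
  have hmsq : ∀ h : ℝ × ℝ,
      min 1 (|h.1| + |h.2|) ^ 2 ≤ 1 * (|h.1| ^ 2 + |h.2|) ^ ((2 : ℝ) - 2) := by
    intro h
    have h22 : ((2 : ℝ) - 2) = 0 := by norm_num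
    rw [h22, Real.rpow_zero, mul_one]
    have hm0 : 0 ≤ min 1 (|h.1| + |h.2|) := le_min zero_le_one (by positivity)
    have hm1 : min 1 (|h.1| + |h.2|) ≤ 1 := min_le_left _ _
    nlinarith
  rw [← integrableOn_univ]
  have hcover : (univ : Set (ℝ × ℝ)) =
      ({x : ℝ | |x| ≤ 1} ×ˢ {x : ℝ | |x| ≤ 1} ∪ {x : ℝ | |x| ≤ 1} ×ˢ {x : ℝ | 1 < |x|}
        ∪ {x : ℝ | 1 < |x|} ×ˢ {x : ℝ | |x| ≤ 1}) ∪ {x : ℝ | 1 < |x|} ×ˢ {x : ℝ | 1 < |x|} := by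
    ext ⟨a, b⟩
    simp only [mem_univ, true_iff, mem_union, mem_prod, mem_setOf_eq]
    rcases le_or_gt |a| 1 with h | h <;> rcases le_or_gt |b| 1 with h' | h' <;> tauto
  rw [hcover]
  refine IntegrableOn.union (IntegrableOn.union (IntegrableOn.union ?_ ?_) ?_) ?_
  · -- Region A : both small
    obtain ⟨θA, hA0, hA1, he₁, he₂⟩ := paramA hα0 hα1 hlamsum hmul h1 hκ0 hκα
    refine regional (C := 3) hFmeas hS hS (int_small he₁) (int_small he₂) ?_
    intro h hn1 hn2 hmem
    refine bd_wrap lam₁ mu κ θA 3 1 hA0 hA1 (by norm_num) hκ0 (by linarith) h hn1 hn2 ?_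
    have h21 : ((2 : ℝ) - 1) = 1 := by norm_num
    rw [h21, Real.rpow_one]
    exact minsq_le (abs_nonneg _) (abs_nonneg _) hmem.1 hmem.2
  · -- Region B : h₁ small, h₂ large
    have he₁ : (-1 : ℝ) < 2 * 0 * (κ - 2) - lam₁ := by linarith
    have he₂ : (1 - 0) * (κ - 2) - mu < (-1 : ℝ) := by linarith
    refine regional (C := 1) hFmeas hS hL (int_small he₁) (int_large he₂) ?_
    intro h hn1 hn2 _
    exact bd_wrap lam₁ mu κ 0 1 2 le_rfl zero_le_one zero_le_one hκ0 (by linarith) h hn1 hn2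
      (hmsq h)
  · -- Region C : h₁ large, h₂ small
    have he₁ : 2 * 1 * (κ - 2) - lam₁ < (-1 : ℝ) := by linarith
    have he₂ : (-1 : ℝ) < (1 - 1) * (κ - 2) - mu := by linarith
    refine regional (C := 1) hFmeas hL hS (int_large he₁) (int_small he₂) ?_
    intro h hn1 hn2 _
    exact bd_wrap lam₁ mu κ 1 1 2 zero_le_one le_rfl zero_le_one hκ0 (by linarith) h hn1 hn2
      (hmsq h)
  · -- Region D : both large
    obtain ⟨θD, hD3, hD4, he₁, he₂⟩ := paramD hα0 hα1 hlamsum hmul h1 hκ0 hκα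
    refine regional (C := 1) hFmeas hL hL (int_large he₁) (int_large he₂) ?_
    intro h hn1 hn2 _
    exact bd_wrap lam₁ mu κ θD 1 2 hD3 hD4 zero_le_one hκ0 (by linarith) h hn1 hn2 (hmsq h)
end
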